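/- The Fourier transform differences are summable over dyadic scales: with Ĵ_{2^{−2ℓ}}(ξ) = exp(−2π²(2^{−ℓ}ξ)²) and χ̂_ℓ(ξ) = sin(2π 2^{−ℓ}ξ)/(2π 2^{−ℓ}ξ), there is a constant C such that for all ξ ∈ ℝ, ∑_{ℓ≥1} |Ĵ_{2^{−2ℓ}}(ξ) − χ̂_ℓ(ξ)| ≤ C. -/

import Mathlib

open Real
open scoped ENNReal

/-- `sinc t = sin t / t`, with value `1` at `t = 0`. -/
noncomputable def _root_.sinc (t : ℝ) : ℝ := if t = 0 then 1 else Real.sin t / t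

/-- Fourier transform of the heat kernel `J_{2^{-2ℓ}}`. -/
noncomputable def Jhat (ℓ : ℕ) (ξ : ℝ) : ℝ :=
  Real.exp (-2 * Real.pi ^ 2 * ((2 : ℝ) ^ (-(ℓ : ℝ)) * ξ) ^ 2)

/-- Fourier transform of the mean-value kernel `χ_ℓ`. -/
noncomputable def chihat (ℓ : ℕ) (ξ : ℝ) : ℝ :=
  _root_.sinc (2 * Real.pi * (2 : ℝ) ^ (-(ℓ : ℝ)) * ξ)

lemma abs_sin_le_one' (t : ℝ) : |Real.sin t| ≤ 1 :=
  abs_le.mpr ⟨Real.neg_one_le_sin t, Real.sin_le_one t⟩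

lemma sinc_pos_bound {t : ℝ} (ht : 0 < t) : |1 - _root_.sinc t| ≤ 2 * t ^ 2 := by
  have hs : _root_.sinc t = Real.sin t / t := if_neg (ne_of_gt ht)
  rcases le_or_gt t 1 with h1 | h1
  · have hlt : Real.sin t < t := Real.sin_lt ht
    have hgt : t - t ^ 3 / 4 < Real.sin t := by have := Real.sin_gt_sub_cube ht; have : 0 < t ^ 3 := (by positivity); linarith
    rw [hs, abs_le]
    constructor
    · rw [neg_le, neg_sub, sub_le_iff_le_add, div_le_iff₀ ht]
      nlinarith
    · rw [sub_le_iff_le_add, ← sub_le_iff_le_add', le_div_iff₀ ht]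
      nlinarith
  · have habs : |Real.sin t / t| ≤ 1 := by
      rw [abs_div, abs_of_pos ht, div_le_one ht]
      exact (abs_sin_le_one' t).trans h1.le
    rw [hs]
    calc |1 - Real.sin t / t| ≤ |(1:ℝ)| + |Real.sin t / t| := abs_sub _ _
      _ ≤ 1 + 1 := by rw [abs_one]; linarith
      _ ≤ 2 * t ^ 2 := by nlinarith

lemma sinc_even (t : ℝ) : _root_.sinc (-t) = _root_.sinc t := by
  rcases eq_or_ne t 0 with rfl | h
  · simp
  · rw [_root_.sinc, _root_.sinc, if_neg (neg_ne_zero.mpr h), if_neg h, Real.sin_neg, neg_div_neg_eq]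

lemma abs_one_sub_sinc (t : ℝ) : |1 - _root_.sinc t| ≤ 2 * t ^ 2 := by
  rcases lt_trichotomy t 0 with h | rfl | h
  · have := sinc_pos_bound (t := -t) (by linarith)
    rw [sinc_even] at this
    simpa using this
  · simp [_root_.sinc]
  · exact sinc_pos_bound h

lemma abs_sinc_le_inv (t : ℝ) (ht : t ≠ 0) : |_root_.sinc t| ≤ |t|⁻¹ := by
  rw [_root_.sinc, if_neg ht, abs_div, div_eq_mul_inv]
  have h0 : (0:ℝ) < |t|⁻¹ := inv_pos.mpr (abs_pos.mpr ht)
  nlinarith [abs_sin_le_one' t, h0]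

lemma key (y : ℝ) :
    |Real.exp (-2 * π ^ 2 * y ^ 2) - _root_.sinc (2 * π * y)| ≤ 100 * min (y ^ 2) (|y|⁻¹) := by
  rcases eq_or_ne y 0 with rfl | hy
  · norm_num [_root_.sinc]
  have hy0 : 0 < |y| := abs_pos.mpr hy
  have hpi : 0 < π := Real.pi_pos
  have hu : (0:ℝ) ≤ 2 * π ^ 2 * y ^ 2 := by positivity
  rcases le_or_gt (|y|) 1 with hsm | hlg
  · -- small case : min = y^2
    have hmin : min (y ^ 2) (|y|⁻¹) = y ^ 2 := by
      apply min_eq_left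
      have h1 : y ^ 2 ≤ 1 := by nlinarith [sq_abs y]
      have h2 : (1:ℝ) ≤ |y|⁻¹ := by
        rw [le_inv_comm₀ one_pos hy0]; simpa using hsm
      linarith
    rw [hmin]
    have hexp1 : Real.exp (-(2 * π ^ 2 * y ^ 2)) ≤ 1 := by
      calc Real.exp (-(2 * π ^ 2 * y ^ 2)) ≤ Real.exp 0 :=
            Real.exp_le_exp.mpr (by linarith)
        _ = 1 := Real.exp_zero
    have hexp2 : 1 - (2 * π ^ 2 * y ^ 2) ≤ Real.exp (-(2 * π ^ 2 * y ^ 2)) := by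
      have := Real.add_one_le_exp (-(2 * π ^ 2 * y ^ 2))
      linarith
    have hA : |Real.exp (-2 * π ^ 2 * y ^ 2) - 1| ≤ 2 * π ^ 2 * y ^ 2 := by
      rw [show -2 * π ^ 2 * y ^ 2 = -(2 * π ^ 2 * y ^ 2) by ring, abs_le]
      constructor <;> linarith
    have hB : |1 - _root_.sinc (2 * π * y)| ≤ 2 * (2 * π * y) ^ 2 := abs_one_sub_sinc _
    have hpi2 : π ^ 2 ≤ 9.93 := by nlinarith [Real.pi_lt_d2]
    calc |Real.exp (-2 * π ^ 2 * y ^ 2) - _root_.sinc (2 * π * y)|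
        ≤ |Real.exp (-2 * π ^ 2 * y ^ 2) - 1| + |1 - _root_.sinc (2 * π * y)| := by
          have := abs_sub_abs_le_abs_sub (Real.exp (-2 * π ^ 2 * y ^ 2)) (_root_.sinc (2 * π * y))
          calc |Real.exp (-2 * π ^ 2 * y ^ 2) - _root_.sinc (2 * π * y)|
              = |(Real.exp (-2 * π ^ 2 * y ^ 2) - 1) + (1 - _root_.sinc (2 * π * y))| := by ring_nf
            _ ≤ _ := abs_add_le _ _
      _ ≤ 2 * π ^ 2 * y ^ 2 + 2 * (2 * π * y) ^ 2 := by linarith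
      _ ≤ 100 * y ^ 2 := by nlinarith [sq_nonneg y]
  · -- large case : min = |y|⁻¹
    have hy2 : 1 < y ^ 2 := by nlinarith [sq_abs y]
    have hmin : min (y ^ 2) (|y|⁻¹) = |y|⁻¹ := by
      apply min_eq_right
      have : |y|⁻¹ < 1 := by
        rw [inv_lt_one_iff₀]; right; exact hlg
      linarith
    rw [hmin]
    have hupos : (0:ℝ) < 2 * π ^ 2 * y ^ 2 := by positivity
    have hexp : Real.exp (-2 * π ^ 2 * y ^ 2) ≤ (2 * π ^ 2 * y ^ 2)⁻¹ := by
      rw [show -2 * π ^ 2 * y ^ 2 = -(2 * π ^ 2 * y ^ 2) by ring, Real.exp_neg]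
      apply inv_anti₀ hupos
      have := Real.add_one_le_exp (2 * π ^ 2 * y ^ 2)
      linarith
    have hexp2 : (2 * π ^ 2 * y ^ 2)⁻¹ ≤ |y|⁻¹ := by
      apply inv_anti₀ hy0
      have h1 : |y| ≤ y ^ 2 := by nlinarith [sq_abs y]
      have h9 : (9:ℝ) ≤ π ^ 2 := by nlinarith [Real.pi_gt_three]
      have h10 : 9 * y ^ 2 ≤ π ^ 2 * y ^ 2 :=
        mul_le_mul_of_nonneg_right h9 (sq_nonneg y)
      nlinarith [sq_nonneg y]
    have hne : (2 * π * y) ≠ 0 := by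
      apply mul_ne_zero (mul_ne_zero two_ne_zero Real.pi_ne_zero) hy
    have hsinc : |_root_.sinc (2 * π * y)| ≤ |y|⁻¹ := by
      refine (abs_sinc_le_inv _ hne).trans ?_
      apply inv_anti₀ hy0
      rw [abs_mul, abs_mul, abs_two, abs_of_pos hpi]
      nlinarith [Real.pi_gt_three, hy0]
    have hexppos : (0:ℝ) < Real.exp (-2 * π ^ 2 * y ^ 2) := Real.exp_pos _
    have hinvpos : (0:ℝ) < |y|⁻¹ := inv_pos.mpr hy0
    calc |Real.exp (-2 * π ^ 2 * y ^ 2) - _root_.sinc (2 * π * y)|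
        ≤ |Real.exp (-2 * π ^ 2 * y ^ 2)| + |_root_.sinc (2 * π * y)| := abs_sub _ _
      _ ≤ |y|⁻¹ + |y|⁻¹ := by
          rw [abs_of_pos hexppos]
          exact add_le_add (hexp.trans hexp2) hsinc
      _ ≤ 100 * |y|⁻¹ := by linarith

lemma exists_N (t : ℝ) (ht : 0 < t) :
    ∃ N : ℕ, t ≤ 2 ^ N ∧ (N = 0 ∨ (2:ℝ) ^ N ≤ 2 * t) := by
  rcases le_or_gt t 1 with h | h
  · exact ⟨0, by simpa using h, Or.inl rfl⟩
  · set L := Real.logb 2 t with hLdef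
    have hL : 0 ≤ L := Real.logb_nonneg (by norm_num) h.le
    refine ⟨⌊L⌋₊ + 1, ?_, Or.inr ?_⟩
    · have h1 : t = (2:ℝ) ^ L := (Real.rpow_logb (by norm_num) (by norm_num) (by linarith)).symm
      have h2 : L ≤ ((⌊L⌋₊ + 1 : ℕ) : ℝ) := by push_cast; exact (Nat.lt_floor_add_one L).le
      calc t = (2:ℝ) ^ L := h1
        _ ≤ (2:ℝ) ^ (((⌊L⌋₊ + 1 : ℕ)) : ℝ) := Real.rpow_le_rpow_of_exponent_le (by norm_num) h2
        _ = 2 ^ (⌊L⌋₊ + 1) := by rw [Real.rpow_natCast]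
    · have h2 : ((⌊L⌋₊ : ℕ) : ℝ) ≤ L := Nat.floor_le hL
      have h3 : (2:ℝ) ^ ⌊L⌋₊ ≤ t := by
        calc (2:ℝ) ^ ⌊L⌋₊ = (2:ℝ) ^ ((⌊L⌋₊ : ℕ) : ℝ) := (Real.rpow_natCast _ _).symm
          _ ≤ (2:ℝ) ^ L := Real.rpow_le_rpow_of_exponent_le (by norm_num) h2
          _ = t := Real.rpow_logb (by norm_num) (by norm_num) (by linarith)
      rw [pow_succ]
      linarith

set_option maxHeartbeats 1000000 in
lemma dyadic_sum (t : ℝ) (ht : 0 ≤ t) :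
    ∑' ℓ : ℕ, ENNReal.ofReal (min ((t / 2 ^ (ℓ + 1)) ^ 2) ((t / 2 ^ (ℓ + 1))⁻¹)) ≤
      ENNReal.ofReal 6 := by
  rcases eq_or_lt_of_le ht with rfl | htpos
  · simp
  obtain ⟨N, hN1, hN2⟩ := exists_N t htpos
  set f : ℕ → ℝ≥0∞ := fun ℓ => ENNReal.ofReal (min ((t / 2 ^ (ℓ + 1)) ^ 2) ((t / 2 ^ (ℓ + 1))⁻¹))
    with hf
  have hsplit : ∑' ℓ, f ℓ = (∑ ℓ ∈ Finset.range N, f ℓ) + ∑' k, f (k + N) :=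
    (Summable.sum_add_tsum_nat_add' (f := f) (k := N) ENNReal.summable).symm
  have hhead : (∑ ℓ ∈ Finset.range N, f ℓ) ≤ ENNReal.ofReal 4 := by
    rcases hN2 with rfl | h2N
    · simp
    have hNpos : (0:ℝ) < 2 ^ N := by positivity
    have ht2 : (2:ℝ) ^ N / 2 ≤ t := by linarith
    have ht2' : (0:ℝ) < 2 ^ N / 2 := by positivity
    have hterm : ∀ ℓ ∈ Finset.range N, f ℓ ≤ ENNReal.ofReal ((2:ℝ) ^ ℓ * (4 / 2 ^ N)) := by
      intro ℓ _
      apply ENNReal.ofReal_le_ofReal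
      refine (min_le_right _ _).trans ?_
      have hp : (0:ℝ) < 2 ^ (ℓ + 1) := by positivity
      rw [inv_div]
      calc (2:ℝ) ^ (ℓ + 1) / t ≤ (2:ℝ) ^ (ℓ + 1) / (2 ^ N / 2) := by
            apply div_le_div_of_nonneg_left hp.le ht2' ht2
        _ = (2:ℝ) ^ ℓ * (4 / 2 ^ N) := by
            rw [pow_succ]; field_simp; ring
    calc (∑ ℓ ∈ Finset.range N, f ℓ)
        ≤ ∑ ℓ ∈ Finset.range N, ENNReal.ofReal ((2:ℝ) ^ ℓ * (4 / 2 ^ N)) :=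
          Finset.sum_le_sum hterm
      _ = ENNReal.ofReal (∑ ℓ ∈ Finset.range N, (2:ℝ) ^ ℓ * (4 / 2 ^ N)) := by
          rw [ENNReal.ofReal_sum_of_nonneg]
          intro ℓ _
          positivity
      _ ≤ ENNReal.ofReal 4 := by
          apply ENNReal.ofReal_le_ofReal
          rw [← Finset.sum_mul]
          have hg : ∑ ℓ ∈ Finset.range N, (2:ℝ) ^ ℓ = 2 ^ N - 1 := by
            rw [geom_sum_eq (by norm_num : (2:ℝ) ≠ 1)]
            norm_num
          rw [hg]
          rw [div_eq_mul_inv, ← mul_assoc]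
          have h4 : (2 ^ N - 1) * 4 ≤ (2:ℝ) ^ N * 4 := by linarith
          calc (2 ^ N - 1) * 4 * (2 ^ N)⁻¹ ≤ (2:ℝ) ^ N * 4 * (2 ^ N)⁻¹ := by
                apply mul_le_mul_of_nonneg_right h4 (by positivity)
            _ = 4 := by field_simp
  have htail : (∑' k, f (k + N)) ≤ 2 := by
    have hterm : ∀ k : ℕ, f (k + N) ≤ (ENNReal.ofReal (1/2)) ^ k := by
      intro k
      rw [hf]
      simp only
      rw [← ENNReal.ofReal_pow (by norm_num)]
      apply ENNReal.ofReal_le_ofReal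
      refine (min_le_left _ _).trans ?_
      have hp : (0:ℝ) < 2 ^ (k + N + 1) := by positivity
      have h1 : t / 2 ^ (k + N + 1) ≤ 1 / 2 ^ (k + 1) := by
        rw [div_le_div_iff₀ hp (by positivity)]
        calc t * 2 ^ (k + 1) ≤ (2:ℝ) ^ N * 2 ^ (k + 1) := by
              apply mul_le_mul_of_nonneg_right hN1 (by positivity)
          _ ≤ 1 * 2 ^ (k + N + 1) := by rw [← pow_add]; ring_nf; exact le_rfl
      have h0 : (0:ℝ) ≤ t / 2 ^ (k + N + 1) := by positivity
      calc (t / 2 ^ (k + N + 1)) ^ 2 ≤ (1 / 2 ^ (k + 1)) ^ 2 := by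
            apply pow_le_pow_left₀ h0 h1
        _ ≤ (1/2 : ℝ) ^ k := by
            rw [div_pow, one_pow, ← pow_mul, div_pow, one_pow]
            apply div_le_div_of_nonneg_left (by norm_num) (by positivity)
            apply pow_le_pow_right₀ (by norm_num)
            omega
    calc (∑' k, f (k + N)) ≤ ∑' k, (ENNReal.ofReal (1/2)) ^ k := ENNReal.tsum_le_tsum hterm
      _ = (1 - ENNReal.ofReal (1/2))⁻¹ := ENNReal.tsum_geometric _
      _ = 2 := by
          have : ENNReal.ofReal (1/2) = 2⁻¹ := by
            rw [one_div, ENNReal.ofReal_inv_of_pos (by norm_num)]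
            norm_num
          rw [this, ENNReal.one_sub_inv_two, inv_inv]
  calc ∑' ℓ, f ℓ = (∑ ℓ ∈ Finset.range N, f ℓ) + ∑' k, f (k + N) := hsplit
    _ ≤ ENNReal.ofReal 4 + 2 := add_le_add hhead htail
    _ = ENNReal.ofReal 6 := by
        rw [show (2 : ℝ≥0∞) = ENNReal.ofReal 2 by norm_num, ← ENNReal.ofReal_add] <;> norm_num

theorem fourier_differences_summable :
    ∃ C : ℝ, 0 < C ∧ ∀ ξ : ℝ,
      (∑' ℓ : ℕ, ENNReal.ofReal |Jhat (ℓ + 1) ξ - chihat (ℓ + 1) ξ|) ≤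
        ENNReal.ofReal C := by
  refine ⟨600, by norm_num, fun ξ => ?_⟩
  have hterm : ∀ ℓ : ℕ, |Jhat (ℓ + 1) ξ - chihat (ℓ + 1) ξ| ≤
      100 * min ((|ξ| / 2 ^ (ℓ + 1)) ^ 2) ((|ξ| / 2 ^ (ℓ + 1))⁻¹) := by
    intro ℓ
    have hy : (2:ℝ) ^ (-((ℓ + 1 : ℕ) : ℝ)) * ξ = ξ / 2 ^ (ℓ + 1) := by
      rw [Real.rpow_neg (by norm_num), Real.rpow_natCast]
      ring
    have hJ : Jhat (ℓ + 1) ξ = Real.exp (-2 * π ^ 2 * (ξ / 2 ^ (ℓ + 1)) ^ 2) := by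
      rw [Jhat, hy]
    have hchi : chihat (ℓ + 1) ξ = _root_.sinc (2 * π * (ξ / 2 ^ (ℓ + 1))) := by
      rw [chihat, mul_assoc, hy]
    have habs : |ξ / 2 ^ (ℓ + 1)| = |ξ| / 2 ^ (ℓ + 1) := by
      rw [abs_div, abs_of_pos (by positivity : (0:ℝ) < 2 ^ (ℓ + 1))]
    have hsq : (ξ / 2 ^ (ℓ + 1)) ^ 2 = (|ξ| / 2 ^ (ℓ + 1)) ^ 2 := by
      rw [← habs, sq_abs]
    have := key (ξ / 2 ^ (ℓ + 1))
    rw [hJ, hchi, ← habs, sq_abs]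
    exact this
  calc (∑' ℓ : ℕ, ENNReal.ofReal |Jhat (ℓ + 1) ξ - chihat (ℓ + 1) ξ|)
      ≤ ∑' ℓ : ℕ, ENNReal.ofReal
          (100 * min ((|ξ| / 2 ^ (ℓ + 1)) ^ 2) ((|ξ| / 2 ^ (ℓ + 1))⁻¹)) :=
        ENNReal.tsum_le_tsum fun ℓ => ENNReal.ofReal_le_ofReal (hterm ℓ)
    _ = ∑' ℓ : ℕ, ENNReal.ofReal 100 *
          ENNReal.ofReal (min ((|ξ| / 2 ^ (ℓ + 1)) ^ 2) ((|ξ| / 2 ^ (ℓ + 1))⁻¹)) := by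
        congr 1
        funext ℓ
        rw [ENNReal.ofReal_mul (by norm_num)]
    _ = ENNReal.ofReal 100 *
          ∑' ℓ : ℕ, ENNReal.ofReal (min ((|ξ| / 2 ^ (ℓ + 1)) ^ 2) ((|ξ| / 2 ^ (ℓ + 1))⁻¹)) :=
        ENNReal.tsum_mul_left
    _ ≤ ENNReal.ofReal 100 * ENNReal.ofReal 6 :=
        mul_le_mul_right (dyadic_sum (|ξ|) (abs_nonneg ξ)) _
    _ = ENNReal.ofReal 600 := by
        rw [← ENNReal.ofReal_mul (by norm_num)]
        norm_num
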